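/- Suppose φ, ψ : 𝓕 → 𝓔 are additive mappings such that ⟨φ(z), ψ(w)⟩ = 0 and a·⟨φ(z), φ(w)⟩·a* = (1−a)·⟨ψ(z), ψ(w)⟩·(1−a)* for all z, w ∈ 𝓕, and set 𝓚 := φ(𝓕) + ψ(𝓕). If f : 𝓔 → 𝓖 is an orthogonally a-Jensen mapping, then there exist unique mappings A : 𝓔 → 𝓖 and B : 𝓔 × 𝓔 → 𝓖 such that: A is additive on 𝓚 with A(a·x) = a·A(x) for x ∈ 𝓚; B is symmetric (B(x,y) = B(y,x)), biadditive on 𝓚 × 𝓚, satisfies B(a·x, a·x) = a·B(x,x) and B((1−a)·x, (1−a)·x) = (1−a)·B(x,x) for x ∈ 𝓚, is orthogonality preserving on 𝓚 × 𝓚 (⟨x,y⟩ = 0 implies B(x,y) = 0 for x, y ∈ 𝓚); and f(x) = A(x) + B(x,x) + f(0) for all x ∈ 𝓚. Moreover, B(x,y) = (1/8)(f(x+y) + f(−x−y) − f(x−y) − f(−x+y)) and A(x) = (1/2)(f(x) − f(−x)) for every x, y ∈ 𝓔. -/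

import Mathlib

/-!
Subtracting `f 0` and taking odd and even parts, `f = T + g + f 0` with `T`, `g` again
orthogonally `a`-Jensen and vanishing at `0`; inverting `a` and `1 - a` makes them orthogonally
additive. The conjugation identity says that `χ := ψ · m*`, with `m = a⁻¹ (1 - a)`, has the same
Gram matrix as `φ`, and `φ(F) ⊥ χ(F)`; hence `φ z + χ z ⊥ φ w - χ w`, and orthogonal additivity
turns this into one functional equation linking `h ∘ φ` and `h ∘ χ`. For odd `h` it makes
`h ∘ φ` additive; for even `h` it forces `h ∘ φ = h ∘ χ` and then the parallelogram law for
`h ∘ φ`. By symmetry the same holds for `ψ`, and since `φ(F) ⊥ ψ(F)` the two pieces glue on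
`K`: `T` is additive there and `g` is a quadratic form whose polarization is `B`.
-/

open scoped RightActions

variable {A : Type*} [CStarAlgebra A] [PartialOrder A] [StarOrderedRing A]

/-- The Hilbert C⋆-module class as it stood in the older Mathlib (right `Aᵐᵒᵖ`-action,
inner product satisfying `⟪x, y <• a⟫ = ⟪x, y⟫ * a`); Mathlib's `CStarModule` now uses a left
action instead. -/
class CStarModuleRight (A : outParam <| Type*) (E : Type*) [NonUnitalSemiring A] [StarRing A]
    [Module ℂ A] [AddCommGroup E] [Module ℂ E] [PartialOrder A] [SMul Aᵐᵒᵖ E] [Norm A] [Norm E]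
    extends Inner A E where
  inner_add_right {x} {y} {z} : inner x (y + z) = inner x y + inner x z
  inner_self_nonneg {x} : 0 ≤ inner x x
  inner_self {x} : inner x x = 0 ↔ x = 0
  inner_op_smul_right {a : A} {x y : E} : inner x (y <• a) = inner x y * a
  inner_smul_right_complex {z : ℂ} {x} {y} : inner x (z • y) = z • inner x y
  star_inner x y : star (inner x y) = inner y x
  norm_eq_sqrt_norm_inner_self x : ‖x‖ = √‖inner x x‖

variable {E : Type*} [NormedAddCommGroup E] [Module ℂ E] [Module Aᵐᵒᵖ E] [CStarModuleRight A E]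
variable {F : Type*} [NormedAddCommGroup F] [Module ℂ F] [Module Aᵐᵒᵖ F] [CStarModuleRight A F]
variable {G : Type*} [NormedAddCommGroup G] [Module ℂ G] [Module Aᵐᵒᵖ G] [CStarModuleRight A G]

/-- A mapping `f : E → G` between inner product `A`-modules is *orthogonally `a`-Jensen* if
`⟪x, y⟫ = 0` implies `f (a·x + (1-a)·y) = a·f x + (1-a)·f y` (module actions written as right
actions `<•`, since `E`, `G` are right `A`-modules). -/
def OrthAJensen (a : A) (f : E → G) : Prop :=
  ∀ x y : E, inner (𝕜 := A) x y = 0 →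
    f (x <• a + y <• (1 - a)) = f x <• a + f y <• (1 - a)

/-- The submodule `K = φ(F) + ψ(F)`. -/
def KSet (φ ψ : F → E) : Set E := {z | ∃ x y : F, z = φ x + ψ y}

/-- The pair `(T, B)` has the properties listed in Theorem 2.7: `T` is additive on `K` and
satisfies `T (a·x) = a·T x` on `K`; `B` is symmetric, biadditive on `K × K`, satisfies
`B (a·x, a·x) = a·B (x, x)` and `B ((1-a)·x, (1-a)·x) = (1-a)·B (x, x)` on `K`, is
orthogonality preserving on `K × K`; and `f x = T x + B x x + f 0` on `K`. -/
def GoodPair (a : A) (φ ψ : F → E) (f : E → G) (p : (E → G) × (E → E → G)) : Prop :=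
  (∀ z₁ ∈ KSet φ ψ, ∀ z₂ ∈ KSet φ ψ, p.1 (z₁ + z₂) = p.1 z₁ + p.1 z₂) ∧
  (∀ z ∈ KSet φ ψ, p.1 (z <• a) = p.1 z <• a) ∧
  (∀ x y : E, p.2 x y = p.2 y x) ∧
  (∀ z₁ ∈ KSet φ ψ, ∀ z₂ ∈ KSet φ ψ, ∀ z₃ ∈ KSet φ ψ,
    p.2 (z₁ + z₂) z₃ = p.2 z₁ z₃ + p.2 z₂ z₃ ∧ p.2 z₁ (z₂ + z₃) = p.2 z₁ z₂ + p.2 z₁ z₃) ∧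
  (∀ z ∈ KSet φ ψ, p.2 (z <• a) (z <• a) = p.2 z z <• a) ∧
  (∀ z ∈ KSet φ ψ, p.2 (z <• (1 - a)) (z <• (1 - a)) = p.2 z z <• (1 - a)) ∧
  (∀ z₁ ∈ KSet φ ψ, ∀ z₂ ∈ KSet φ ψ, inner (𝕜 := A) z₁ z₂ = 0 → p.2 z₁ z₂ = 0) ∧
  (∀ z ∈ KSet φ ψ, f z = p.1 z + p.2 z z + f 0)

set_option linter.unusedSectionVars false

local notation "⟪" x ", " y "⟫" => inner A x y

lemma eq_of_add_self_eq_add_self (R : Type*) {M : Type*} [Ring R] [Invertible (2 : R)]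
    [AddCommGroup M] [Module R M] {x y : M} (h : x + x = y + y) : x = y := by
  rw [← invOf_two_smul_add_invOf_two_smul R x, ← invOf_two_smul_add_invOf_two_smul R y,
    ← smul_add, ← smul_add, h]

lemma polar_add_left_of_parallelogram (R : Type*) {M N : Type*} [Ring R] [Invertible (2 : R)]
    [AddCommGroup M] [Module R M] [AddCommGroup N] {p : M → N} (hp0 : p 0 = 0)
    (hp : ∀ x y, p (x + y) + p (x - y) = 2 • p x + 2 • p y) (x y z : M) :
    p (x + y + z) - p (x + y - z) = (p (x + z) - p (x - z)) + (p (y + z) - p (y - z)) := by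
  set P : M → N := fun u => p (u + z) - p (u - z)
  have hjensen : ∀ u v, P (u + v) + P (u - v) = 2 • P u := fun u v => by
    have h₁ := hp (u + z) v
    have h₂ := hp (u - z) v
    simp only [P]
    rw [show u + v + z = u + z + v by abel, show u - v + z = u + z - v by abel,
      show u + v - z = u - z + v by abel, show u - v - z = u - z - v by abel, smul_sub]
    linear_combination (norm := abel) h₁ - h₂
  have hP0 : P 0 = 0 := by
    have h := hp 0 z
    simp only [P, zero_add, zero_sub, hp0, smul_zero] at h ⊢
    linear_combination (norm := abel) -h
  have hdouble : ∀ u, P (u + u) = 2 • P u := fun u => by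
    simpa only [sub_self, hP0, add_zero] using hjensen u u
  obtain ⟨s, rfl⟩ : ∃ s, s + s = x := ⟨_, invOf_two_smul_add_invOf_two_smul R x⟩
  obtain ⟨t, rfl⟩ : ∃ t, t + t = y := ⟨_, invOf_two_smul_add_invOf_two_smul R y⟩
  have h := hjensen (s + t) (s - t)
  rw [← hdouble, show s + t + (s - t) = s + s by abel, show s + t - (s - t) = t + t by abel,
    show s + t + (s + t) = s + s + (t + t) by abel] at h
  exact h.symm

lemma eq_mul_mul_star_of_mul_mul_star_eq {R : Type*} [Monoid R] [StarMul R] {a c x y : R}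
    [Invertible a] (h : a * x * star a = c * y * star c) :
    x = ⅟a * c * y * star (⅟a * c) := by
  calc x = ⅟a * (a * x * star a) * star (⅟a) := by
        simp only [← mul_assoc, invOf_mul_self, one_mul]
        rw [mul_assoc, ← star_mul, invOf_mul_self, star_one, mul_one]
    _ = ⅟a * c * y * star (⅟a * c) := by rw [h, star_mul]; simp only [mul_assoc]

namespace CStarModuleRight

@[simp] lemma inner_zero_right (x : E) : ⟪x, (0 : E)⟫ = 0 := by
  simpa using (inner_add_right (A := A) (x := x) (y := (0 : E)) (z := 0))

@[simp] lemma inner_zero_left (x : E) : ⟪(0 : E), x⟫ = 0 := by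
  rw [← star_inner, inner_zero_right, star_zero]

@[simp] lemma inner_neg_right (x y : E) : ⟪x, -y⟫ = -⟪x, y⟫ := by
  rw [eq_neg_iff_add_eq_zero, ← inner_add_right, neg_add_cancel, inner_zero_right]

@[simp] lemma inner_neg_left (x y : E) : ⟪-x, y⟫ = -⟪x, y⟫ := by
  rw [← star_inner, inner_neg_right, star_neg, star_inner]

lemma inner_add_left (x y z : E) : ⟪x + y, z⟫ = ⟪x, z⟫ + ⟪y, z⟫ := by
  rw [← star_inner, inner_add_right, star_add, star_inner, star_inner]

lemma inner_sub_right (x y z : E) : ⟪x, y - z⟫ = ⟪x, y⟫ - ⟪x, z⟫ := by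
  rw [sub_eq_add_neg, inner_add_right, inner_neg_right, sub_eq_add_neg]

lemma inner_eq_zero_comm {x y : E} : ⟪x, y⟫ = 0 ↔ ⟪y, x⟫ = 0 := by
  rw [← star_inner x y, star_eq_zero]

lemma inner_op_smul_left (b : A) (x y : E) : ⟪x <• b, y⟫ = star b * ⟪x, y⟫ := by
  rw [← star_inner, inner_op_smul_right, star_mul, star_inner]

lemma ext_inner_right {x y : E} (h : ∀ z : E, ⟪z, x⟫ = ⟪z, y⟫) : x = y := by
  rw [← sub_eq_zero, ← inner_self (A := A), inner_sub_right, h, sub_self]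

lemma smul_op_smul_comm (c : ℂ) (b : A) (x : E) : (c • x) <• b = c • (x <• b) :=
  ext_inner_right fun z => by
    rw [inner_op_smul_right, inner_smul_right_complex, inner_smul_right_complex,
      inner_op_smul_right, smul_mul_assoc]

end CStarModuleRight

open CStarModuleRight

def OrthAdditive (h : E → G) : Prop :=
  ∀ x y : E, ⟪x, y⟫ = 0 → h (x + y) = h x + h y

namespace OrthAJensen

variable {a : A} {f g : E → G}

lemma const (c : G) : OrthAJensen a fun _ : E => c := fun _ _ _ => by
  rw [← add_smul, ← MulOpposite.op_add, add_sub_cancel, MulOpposite.op_one, one_smul]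

lemma add (hf : OrthAJensen a f) (hg : OrthAJensen a g) : OrthAJensen a fun x => f x + g x :=
  fun x y hxy => by simp only [hf x y hxy, hg x y hxy, smul_add]; abel

lemma sub (hf : OrthAJensen a f) (hg : OrthAJensen a g) : OrthAJensen a fun x => f x - g x :=
  fun x y hxy => by simp only [hf x y hxy, hg x y hxy, smul_sub]; abel

lemma const_smul (c : ℂ) (hf : OrthAJensen a f) : OrthAJensen a fun x => c • f x :=
  fun x y hxy => by simp only [hf x y hxy, smul_add, smul_op_smul_comm]

lemma comp_neg (hf : OrthAJensen a f) : OrthAJensen a fun x => f (-x) := fun x y hxy => by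
  simpa only [smul_neg, neg_add] using hf (-x) (-y) (by simpa using hxy)

lemma map_op_smul (hf : OrthAJensen a f) (h0 : f 0 = 0) (x : E) : f (x <• a) = f x <• a := by
  simpa [h0] using hf x 0 (inner_zero_right x)

lemma map_op_smul_one_sub (hf : OrthAJensen a f) (h0 : f 0 = 0) (x : E) :
    f (x <• (1 - a)) = f x <• (1 - a) := by
  simpa [h0] using hf 0 x (inner_zero_left x)

lemma orthAdditive [Invertible a] [Invertible (1 - a)] (hf : OrthAJensen a f) (h0 : f 0 = 0) :
    OrthAdditive f := fun x y hxy => by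
  have key := hf (x <• ⅟a) (y <• ⅟(1 - a)) (by
    rw [inner_op_smul_left, inner_op_smul_right, hxy, zero_mul, mul_zero])
  simpa only [op_smul_op_smul, invOf_mul_self, ← hf.map_op_smul h0,
    ← hf.map_op_smul_one_sub h0, MulOpposite.op_one, one_smul] using key

end OrthAJensen

namespace OrthAdditive

variable {h : E → G}

lemma map_zero (hh : OrthAdditive h) : h 0 = 0 := by
  simpa using hh 0 0 (inner_zero_left 0)

variable {φ ψ : F →+ E} {m : A}

lemma map_add_add_map_sub (hh : OrthAdditive h) (horth : ∀ z w, ⟪φ z, ψ w⟫ = 0)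
    (hconj : ∀ z w, ⟪φ z, φ w⟫ = m * ⟪ψ z, ψ w⟫ * star m) (z w : F) :
    h (φ (z + w)) + h (ψ (z - w) <• star m)
      = h (φ z) + h (ψ z <• star m) + (h (φ w) + h (ψ (-w) <• star m)) := by
  have hφχ : ∀ z w, ⟪φ z, ψ w <• star m⟫ = 0 := fun z w => by
    rw [inner_op_smul_right, horth, zero_mul]
  have hχφ : ∀ z w, ⟪ψ z <• star m, φ w⟫ = 0 := fun z w => by
    rw [inner_op_smul_left, inner_eq_zero_comm.mp (horth w z), mul_zero]
  have hcross : ⟪φ z + ψ z <• star m, φ w + ψ (-w) <• star m⟫ = 0 := by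
    rw [CStarModuleRight.inner_add_left, CStarModuleRight.inner_add_right,
      CStarModuleRight.inner_add_right, hφχ, hχφ, inner_op_smul_left, inner_op_smul_right, map_neg,
      CStarModuleRight.inner_neg_right, hconj, star_star]
    noncomm_ring
  calc h (φ (z + w)) + h (ψ (z - w) <• star m)
      = h (φ (z + w) + ψ (z - w) <• star m) := (hh _ _ (hφχ _ _)).symm
    _ = h ((φ z + ψ z <• star m) + (φ w + ψ (-w) <• star m)) := by
        rw [map_add, map_sub, map_neg, smul_sub, smul_neg]; abel_nf
    _ = h (φ z) + h (ψ z <• star m) + (h (φ w) + h (ψ (-w) <• star m)) := by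
        rw [hh _ _ hcross, hh _ _ (hφχ _ _), hh _ _ (hφχ _ _)]

lemma map_add_of_odd (hh : OrthAdditive h) (hodd : h.Odd)
    (horth : ∀ z w, ⟪φ z, ψ w⟫ = 0) (hconj : ∀ z w, ⟪φ z, φ w⟫ = m * ⟪ψ z, ψ w⟫ * star m)
    (z w : F) : h (φ (z + w)) = h (φ z) + h (φ w) := by
  have hχodd : ∀ u, h (ψ (-u) <• star m) = -h (ψ u <• star m) := fun u => by
    rw [map_neg, smul_neg, hodd]
  have h₁ := hh.map_add_add_map_sub horth hconj z w
  have h₂ := hh.map_add_add_map_sub horth hconj w z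
  rw [hχodd] at h₁ h₂
  rw [add_comm w z, ← neg_sub z w, hχodd] at h₂
  apply eq_of_add_self_eq_add_self ℂ
  linear_combination (norm := abel) h₁ + h₂

lemma map_add_add_map_sub_of_even (hh : OrthAdditive h) (heven : h.Even)
    (horth : ∀ z w, ⟪φ z, ψ w⟫ = 0) (hconj : ∀ z w, ⟪φ z, φ w⟫ = m * ⟪ψ z, ψ w⟫ * star m)
    (z w : F) : h (φ (z + w)) + h (φ (z - w)) = 2 • h (φ z) + 2 • h (φ w) := by
  have hφeven : ∀ u, h (φ (-u)) = h (φ u) := fun u => by rw [map_neg, heven]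
  have hχeven : ∀ u, h (ψ (-u) <• star m) = h (ψ u <• star m) := fun u => by
    rw [map_neg, smul_neg, heven]
  have hφχ : ∀ u, h (φ u) = h (ψ u <• star m) := fun u => by
    obtain ⟨v, rfl⟩ : ∃ v, v + v = u := ⟨_, invOf_two_smul_add_invOf_two_smul ℂ u⟩
    have h₁ := hh.map_add_add_map_sub horth hconj v v
    have h₂ := hh.map_add_add_map_sub horth hconj v (-v)
    simp only [sub_self, add_neg_cancel, sub_neg_eq_add, neg_neg, _root_.map_zero, smul_zero,
      hh.map_zero, add_zero, zero_add, hφeven, hχeven] at h₁ h₂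
    exact h₁.trans h₂.symm
  have h₀ := hh.map_add_add_map_sub horth hconj z w
  rw [hχeven, ← hφχ, ← hφχ, ← hφχ] at h₀
  rw [h₀, two_nsmul, two_nsmul]

end OrthAdditive

lemma kSet_eq_range (φ ψ : F →+ E) : KSet φ ψ = Set.range (φ.coprod ψ) := by
  ext z
  constructor
  · rintro ⟨x, y, rfl⟩
    exact ⟨(x, y), rfl⟩
  · rintro ⟨⟨x, y⟩, rfl⟩
    exact ⟨x, y, rfl⟩

section Decomposition

variable {a : A} [Invertible a] [Invertible (1 - a)] {φ ψ : F →+ E} {h : E → G}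

lemma OrthAdditive.map_coprod_add_of_odd (hh : OrthAdditive h) (hodd : h.Odd)
    (horth : ∀ z w, ⟪φ z, ψ w⟫ = 0)
    (heq : ∀ z w, a * ⟪φ z, φ w⟫ * star a = (1 - a) * ⟪ψ z, ψ w⟫ * star (1 - a))
    (X Y : F × F) : h (φ.coprod ψ (X + Y)) = h (φ.coprod ψ X) + h (φ.coprod ψ Y) := by
  have hφ := hh.map_add_of_odd hodd horth
    fun z w => eq_mul_mul_star_of_mul_mul_star_eq (heq z w)
  have hψ := hh.map_add_of_odd hodd (fun z w => inner_eq_zero_comm.mp (horth w z))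
    fun z w => eq_mul_mul_star_of_mul_mul_star_eq (heq z w).symm
  simp only [AddMonoidHom.coprod_apply, Prod.fst_add, Prod.snd_add, hh _ _ (horth _ _), hφ, hψ]
  abel

lemma OrthAdditive.map_coprod_add_add_map_coprod_sub_of_even (hh : OrthAdditive h)
    (heven : h.Even) (horth : ∀ z w, ⟪φ z, ψ w⟫ = 0)
    (heq : ∀ z w, a * ⟪φ z, φ w⟫ * star a = (1 - a) * ⟪ψ z, ψ w⟫ * star (1 - a))
    (X Y : F × F) :
    h (φ.coprod ψ (X + Y)) + h (φ.coprod ψ (X - Y))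
      = 2 • h (φ.coprod ψ X) + 2 • h (φ.coprod ψ Y) := by
  have hφ := hh.map_add_add_map_sub_of_even heven horth
    fun z w => eq_mul_mul_star_of_mul_mul_star_eq (heq z w)
  have hψ := hh.map_add_add_map_sub_of_even heven (fun z w => inner_eq_zero_comm.mp (horth w z))
    fun z w => eq_mul_mul_star_of_mul_mul_star_eq (heq z w).symm
  simp only [AddMonoidHom.coprod_apply, Prod.fst_add, Prod.snd_add, Prod.fst_sub, Prod.snd_sub,
    hh _ _ (horth _ _)]
  rw [add_add_add_comm, hφ, hψ, smul_add, smul_add]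
  abel

end Decomposition

noncomputable def polarization (g : E → G) (x y : E) : G := (4 : ℂ)⁻¹ • (g (x + y) - g (x - y))

section Polarization

variable {g : E → G}

lemma polarization_comm (heven : g.Even) (x y : E) : polarization g x y = polarization g y x := by
  rw [polarization, polarization, add_comm y x, ← neg_sub x y, heven]

lemma polarization_self (hg0 : g 0 = 0) (x : E) :
    polarization g x x = (4 : ℂ)⁻¹ • g (x + x) := by
  rw [polarization, sub_self, hg0, sub_zero]

lemma polarization_op_smul_self (hg0 : g 0 = 0) {b : A} (hb : ∀ x, g (x <• b) = g x <• b)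
    (x : E) : polarization g (x <• b) (x <• b) = polarization g x x <• b := by
  rw [polarization_self hg0, polarization_self hg0, ← smul_add, hb, smul_op_smul_comm]

lemma OrthAdditive.polarization_eq_zero (hg : OrthAdditive g) (heven : g.Even) {x y : E}
    (hxy : ⟪x, y⟫ = 0) : polarization g x y = 0 := by
  have hxy' : ⟪x, -y⟫ = 0 := by rw [CStarModuleRight.inner_neg_right, hxy, neg_zero]
  rw [polarization, sub_eq_add_neg x y, hg _ _ hxy, hg _ _ hxy', heven, sub_self, smul_zero]

lemma polarization_add_left {M : Type*} [AddCommGroup M] [Module ℂ M] (L : M →+ E)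
    (hg0 : g 0 = 0) (hpar : ∀ X Y, g (L (X + Y)) + g (L (X - Y)) = 2 • g (L X) + 2 • g (L Y))
    (X Y Z : M) :
    polarization g (L X + L Y) (L Z) = polarization g (L X) (L Z) + polarization g (L Y) (L Z) := by
  have key := polar_add_left_of_parallelogram ℂ (p := fun X => g (L X))
    (by rw [_root_.map_zero, hg0]) hpar X Y Z
  simp only [polarization, ← map_add, ← map_sub, ← smul_add, key]

end Polarization

theorem goodPair_of_odd_even {a : A} [Invertible a] [Invertible (1 - a)] {φ ψ : F →+ E}
    (horth : ∀ z w, ⟪φ z, ψ w⟫ = 0)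
    (heq : ∀ z w, a * ⟪φ z, φ w⟫ * star a = (1 - a) * ⟪ψ z, ψ w⟫ * star (1 - a))
    {f T g : E → G} (hT : OrthAJensen a T) (hT0 : T 0 = 0) (hTodd : T.Odd)
    (hg : OrthAJensen a g) (hg0 : g 0 = 0) (hgeven : g.Even)
    (hf : ∀ x, f x = T x + g x + f 0) :
    GoodPair a φ ψ f (T, polarization g) := by
  have hgL := (hg.orthAdditive hg0).map_coprod_add_add_map_coprod_sub_of_even hgeven horth heq
  have hadd := polarization_add_left (φ.coprod ψ) hg0 hgL
  simp only [GoodPair, kSet_eq_range, Set.forall_mem_range]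
  refine ⟨fun X Y => ?_, fun _ => hT.map_op_smul hT0 _, polarization_comm hgeven,
    fun X Y Z => ⟨hadd X Y Z, ?_⟩, fun _ => polarization_op_smul_self hg0 (hg.map_op_smul hg0) _,
    fun _ => polarization_op_smul_self hg0 (hg.map_op_smul_one_sub hg0) _,
    fun _ _ => (hg.orthAdditive hg0).polarization_eq_zero hgeven, fun X => ?_⟩
  · rw [← map_add, (hT.orthAdditive hT0).map_coprod_add_of_odd hTodd horth heq]
  · rw [polarization_comm hgeven, hadd, polarization_comm hgeven (φ.coprod ψ Y),
      polarization_comm hgeven (φ.coprod ψ Z)]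
  · have h2 := hgL X X
    rw [sub_self, _root_.map_zero, hg0, add_zero] at h2
    rw [hf, polarization_self hg0, ← map_add, h2]
    module

/-- Theorem 2.7, the main result: an orthogonally `a`-Jensen mapping `f` is of the form
`f x = T x + B x x + f 0` on `K = φ(F) + ψ(F)` for a unique pair `(T, B)` as in `GoodPair`;
moreover `B x y = (1/8)(f (x+y) + f (-x-y) - f (x-y) - f (-x+y))` and
`T x = (1/2)(f x - f (-x))` for all `x, y ∈ E`. -/
theorem main_theorem (a : A) [Invertible a] [Invertible (1 - a)] (φ ψ : F → E)
    (hφ : ∀ z w : F, φ (z + w) = φ z + φ w)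
    (hψ : ∀ z w : F, ψ (z + w) = ψ z + ψ w)
    (horth : ∀ z w : F, inner (𝕜 := A) (φ z) (ψ w) = 0)
    (heq : ∀ z w : F,
      a * inner (𝕜 := A) (φ z) (φ w) * star a
        = (1 - a) * inner (𝕜 := A) (ψ z) (ψ w) * star (1 - a))
    (f : E → G) (hf : OrthAJensen a f) :
    ∃! p : (E → G) × (E → E → G), GoodPair a φ ψ f p ∧
      (∀ x y : E,
        p.2 x y = (8 : ℂ)⁻¹ • (f (x + y) + f (-x - y) - f (x - y) - f (-x + y))) ∧
      (∀ x : E, p.1 x = (2 : ℂ)⁻¹ • (f x - f (-x))) := by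
  set T : E → G := fun x => (2 : ℂ)⁻¹ • (f x - f (-x))
  set g : E → G := fun x => (2 : ℂ)⁻¹ • (f x + f (-x)) - f 0
  have hB : ∀ x y : E, polarization g x y
      = (8 : ℂ)⁻¹ • (f (x + y) + f (-x - y) - f (x - y) - f (-x + y)) := fun x y => by
    rw [show -x - y = -(x + y) by abel, show -x + y = -(x - y) by abel]
    simp only [polarization, g]
    module
  have hT : OrthAJensen a T := (hf.sub hf.comp_neg).const_smul _
  have hg : OrthAJensen a g := ((hf.add hf.comp_neg).const_smul _).sub (.const _)
  have hgood : GoodPair a φ ψ f (T, polarization g) :=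
    goodPair_of_odd_even (φ := AddMonoidHom.mk' φ hφ) (ψ := AddMonoidHom.mk' ψ hψ) horth heq
      hT (by simp [T]) (fun x => by simp only [T, neg_neg]; module)
      hg (by simp only [g, neg_zero]; module) (fun x => by simp only [g, neg_neg, add_comm])
      (fun x => by simp only [T, g]; module)
  refine ⟨(T, polarization g), ⟨hgood, hB, fun _ => rfl⟩, ?_⟩
  rintro ⟨T', B'⟩ ⟨-, hB', hT'⟩
  simp only [Prod.mk.injEq]
  exact ⟨funext hT', funext₂ fun x y => (hB' x y).trans (hB x y).symm⟩
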